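/- Let G : [0,1]^n → ℝ be continuously differentiable, nonnegative, and DR-submodular (gradient antitone). Let o, y ∈ [0,1]^n and M ∈ (0,1) satisfy 0 ≤ y ≤ (1−M)·1. Then G(o + (1 − o) ⊙ y) ≥ M·G(o). -/

import Mathlib

/-!
Put `d = (1 - o) ⊙ y / (1 - M)`, so that `o + d` still lies in the cube and the point to bound
is `o + (1 - M) • d`. DR-submodularity makes the derivative `⟪∇G (o + s • d), d⟫` of
`g s = G (o + s • d)` nonincreasing on `[0, 1]` since `d ≥ 0`, so `g` is concave there, and
`g (1 - M) ≥ M g 0 + (1 - M) g 1 ≥ M g 0` because `g 1 ≥ 0`.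
-/

open Set

def unitCube (n : ℕ) : Set (EuclideanSpace ℝ (Fin n)) := {x | ∀ i, 0 ≤ x i ∧ x i ≤ 1}

theorem convex_unitCube (n : ℕ) : Convex ℝ (unitCube n) := by
  intro x hx y hy a b ha hb hab i
  simp only [PiLp.add_apply, PiLp.smul_apply, smul_eq_mul]
  constructor
  · nlinarith [hx i, hy i]
  · nlinarith [hx i, hy i]

theorem fderiv_apply_eq_sum_gradient_mul {n : ℕ} (G : EuclideanSpace ℝ (Fin n) → ℝ)
    (x v : EuclideanSpace ℝ (Fin n)) : fderiv ℝ G x v = ∑ i, gradient G x i * v i := by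
  rw [← inner_gradient_left, PiLp.inner_apply]
  simp only [RCLike.inner_apply, conj_trivial, mul_comm]

theorem concaveOn_comp_line_of_antitoneOn_fderiv {E : Type*} [NormedAddCommGroup E]
    [NormedSpace ℝ E] {G : E → ℝ} (hG : Differentiable ℝ G) (x d : E) {D : Set ℝ}
    (hD : Convex ℝ D) (hanti : AntitoneOn (fun s => fderiv ℝ G (x + s • d) d) D) :
    ConcaveOn ℝ D (fun s => G (x + s • d)) := by
  have hderiv : ∀ s : ℝ, HasDerivAt (fun s => G (x + s • d)) (fderiv ℝ G (x + s • d) d) s :=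
    fun s => (hG _).hasFDerivAt.comp_hasDerivAt s
      (by simpa using ((hasDerivAt_id s).smul_const d).const_add x)
  have hdiff : Differentiable ℝ (fun s => G (x + s • d)) := fun s => (hderiv s).differentiableAt
  refine AntitoneOn.concaveOn_of_deriv hD hdiff.continuous.continuousOn hdiff.differentiableOn ?_
  have hderiv_eq : deriv (fun s => G (x + s • d)) = fun s => fderiv ℝ G (x + s • d) d :=
    funext fun s => (hderiv s).deriv
  exact hderiv_eq ▸ hanti.mono interior_subset

theorem ConcaveOn.sub_mul_apply_zero_le {f : ℝ → ℝ} (hf : ConcaveOn ℝ (Icc 0 1) f)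
    (hf1 : 0 ≤ f 1) {t : ℝ} (ht : t ∈ Icc 0 1) : (1 - t) * f 0 ≤ f t := by
  have h := hf.2 (left_mem_Icc.2 zero_le_one) (right_mem_Icc.2 zero_le_one)
    (sub_nonneg.2 ht.2) ht.1 (sub_add_cancel 1 t)
  simp only [smul_eq_mul, mul_zero, mul_one, zero_add] at h
  linarith [mul_nonneg ht.1 hf1]

theorem antitoneOn_fderiv_line_of_dr_submodular {n : ℕ} {G : EuclideanSpace ℝ (Fin n) → ℝ}
    (hAnti : ∀ a b, a ∈ unitCube n → b ∈ unitCube n → (∀ i, a i ≤ b i) →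
      ∀ i, gradient G b i ≤ gradient G a i)
    {x d : EuclideanSpace ℝ (Fin n)} (hx : x ∈ unitCube n) (hxd : x + d ∈ unitCube n)
    (hd : ∀ i, 0 ≤ d i) :
    AntitoneOn (fun s : ℝ => fderiv ℝ G (x + s • d) d) (Icc 0 1) := by
  intro s hs t ht hst
  simp only [fderiv_apply_eq_sum_gradient_mul]
  refine Finset.sum_le_sum fun i _ => mul_le_mul_of_nonneg_right ?_ (hd i)
  refine hAnti _ _ ((convex_unitCube n).add_smul_mem hx hxd hs)
    ((convex_unitCube n).add_smul_mem hx hxd ht) (fun j => ?_) i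
  simp only [PiLp.add_apply, PiLp.smul_apply, smul_eq_mul]
  nlinarith [hd j]

theorem dr_submodular_measured_lower_bound (n : ℕ) (G : EuclideanSpace ℝ (Fin n) → ℝ)
    (hG : ContDiff ℝ 1 G)
    (hAnti : ∀ a b : EuclideanSpace ℝ (Fin n),
      (∀ i, 0 ≤ a i ∧ a i ≤ 1) → (∀ i, 0 ≤ b i ∧ b i ≤ 1) → (∀ i, a i ≤ b i) →
      ∀ i, gradient G b i ≤ gradient G a i)
    (hNonneg : ∀ x : EuclideanSpace ℝ (Fin n), (∀ i, 0 ≤ x i ∧ x i ≤ 1) → 0 ≤ G x)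
    (o y : EuclideanSpace ℝ (Fin n)) (ho : ∀ i, 0 ≤ o i ∧ o i ≤ 1)
    (M : ℝ) (hM : M ∈ Set.Ioo (0 : ℝ) 1)
    (hy : ∀ i, 0 ≤ y i ∧ y i ≤ 1 - M) :
    G (WithLp.toLp 2 (fun i => o i + (1 - o i) * y i) : EuclideanSpace ℝ (Fin n)) ≥ M * G o := by
  obtain ⟨hM0, hM1⟩ := hM
  have h1M : 0 < 1 - M := sub_pos.2 hM1
  set d : EuclideanSpace ℝ (Fin n) := WithLp.toLp 2 fun i => (1 - o i) * y i / (1 - M)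
  have hd : ∀ i, 0 ≤ d i := fun i =>
    div_nonneg (mul_nonneg (sub_nonneg.2 (ho i).2) (hy i).1) h1M.le
  have hdle : ∀ i, d i ≤ 1 - o i := fun i =>
    (div_le_iff₀ h1M).2 (mul_le_mul_of_nonneg_left (hy i).2 (sub_nonneg.2 (ho i).2))
  have hod : o + d ∈ unitCube n := fun i => by
    simp only [PiLp.add_apply]
    constructor <;> linarith [ho i, hd i, hdle i]
  have hconc := concaveOn_comp_line_of_antitoneOn_fderiv (hG.differentiable one_ne_zero) o d
    (convex_Icc 0 1) (antitoneOn_fderiv_line_of_dr_submodular hAnti ho hod hd)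
  have hbound := hconc.sub_mul_apply_zero_le (by simpa using hNonneg _ hod) ⟨h1M.le, by linarith⟩
  have htarget : o + (1 - M) • d = WithLp.toLp 2 (fun i => o i + (1 - o i) * y i) := by
    ext i
    simp only [d, PiLp.add_apply, PiLp.smul_apply, smul_eq_mul]
    field_simp
  simpa [htarget] using hbound
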